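/- arXiv:math/0503585 — 8 statements merged into one kernel-verified Lean document; each statement's English description precedes it below -/
import Mathlib

section
/- Under hypothesis (H), for all sufficiently large x ≥ 0 one has ε·Φ(Φ'⁻¹(x)) ≤ Φ*(x) ≤ (1-ε)·Φ(Φ'⁻¹(x)), where Φ*(x) = sup_y {xy - Φ(y)} is the Legendre transform and Φ'⁻¹ denotes the inverse of Φ' on [M, ∞). -/
open Real

/-- Legendre–Fenchel transform of `Φ`. -/
noncomputable def legendre (Φ : ℝ → ℝ) (x : ℝ) : ℝ := ⨆ y : ℝ, (x * y - Φ y)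

theorem stmt3 (Φ : ℝ → ℝ) (ε M : ℝ)
    (hΦ : ContDiff ℝ 2 Φ) (hsym : ∀ x, Φ (-x) = Φ x)
    (hconv : ConvexOn ℝ Set.univ Φ)
    (hε : 0 < ε) (hε' : ε ≤ 1/2) (hM : 0 < M) (hΦM : 0 < Φ M)
    (hH : ∀ x ≥ M, (1 + ε) * Φ x ≤ x * deriv Φ x ∧ x * deriv Φ x ≤ (2 - ε) * Φ x)
    (hmono : StrictMonoOn (deriv Φ) (Set.Ici M)) :
    ∃ x₀ : ℝ, ∀ x ≥ x₀, 0 ≤ x →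
      ε * Φ (Function.invFunOn (deriv Φ) (Set.Ici M) x) ≤ legendre Φ x ∧
      legendre Φ x ≤ (1 - ε) * Φ (Function.invFunOn (deriv Φ) (Set.Ici M) x) := by
  have hd : ∀ y : ℝ, DifferentiableAt ℝ Φ y :=
    fun y => (hΦ.differentiable (by norm_num)).differentiableAt
  -- tangent line inequality
  have tangent : ∀ t y : ℝ, Φ t + deriv Φ t * (y - t) ≤ Φ y := by
    intro t y
    rcases lt_trichotomy y t with h | h | h
    · have := hconv.slope_le_deriv (Set.mem_univ y) (Set.mem_univ t) h (hd t)
      rw [slope_def_field] at this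
      have h2 : (0:ℝ) < t - y := by linarith
      rw [div_le_iff₀ h2] at this
      nlinarith
    · simp [h]
    · have := hconv.deriv_le_slope (Set.mem_univ t) (Set.mem_univ y) h (hd t)
      rw [slope_def_field] at this
      have h2 : (0:ℝ) < y - t := by linarith
      rw [le_div_iff₀ h2] at this
      nlinarith
  -- derivative positive at M
  have hdM : 0 < deriv Φ M := by
    have h1 := (hH M le_rfl).1
    nlinarith
  have hdpos : ∀ s, M ≤ s → 0 < deriv Φ s := by
    intro s hs
    rcases eq_or_lt_of_le hs with rfl | hs'
    · exact hdM
    · exact hdM.trans (hmono (Set.mem_Ici.2 le_rfl) (Set.mem_Ici.2 hs) hs')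
  -- Φ positive on [M, ∞)
  have hΦpos : ∀ s, M ≤ s → 0 < Φ s := by
    intro s hs
    have := tangent M s
    nlinarith [hdpos M le_rfl]
  -- growth step
  set K : ℝ := (1 + 2*ε)/ε with hK
  have hK1 : 1 < K := by rw [hK, lt_div_iff₀ hε]; linarith
  set r : ℝ := (1+ε)*(K-1)/K with hr
  have hr1 : 1 < r := by
    have hrval : r = (1+ε)^2/(1+2*ε) := by
      rw [hr, hK]; field_simp; ring
    rw [hrval, lt_div_iff₀ (by linarith)]
    nlinarith
  have step : ∀ s, M ≤ s → r * deriv Φ s ≤ deriv Φ (K * s) := by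
    intro s hs
    have hs0 : 0 < s := hM.trans_le hs
    have hKs : M ≤ K * s := by nlinarith
    have h1 : deriv Φ s * s * (K - 1) ≤ Φ (K * s) := by
      have := tangent s (K * s)
      nlinarith [hΦpos s hs]
    have h2 := (hH (K*s) hKs).1
    have h3 : 0 < K * s := by nlinarith
    rw [hr]
    rw [div_mul_eq_mul_div, div_le_iff₀ (by linarith : (0:ℝ) < K)]
    have hds := (hdpos (K*s) hKs)
    nlinarith
  -- derivative unbounded
  have iter : ∀ n : ℕ, M ≤ K^n * M ∧ r^n * deriv Φ M ≤ deriv Φ (K^n * M) := by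
    intro n
    induction n with
    | zero => simp
    | succ n ih =>
      obtain ⟨ih1, ih2⟩ := ih
      constructor
      · calc M ≤ K^n * M := ih1
          _ ≤ K^(n+1) * M := by
            have : (0:ℝ) < K^n := pow_pos (by linarith) n
            rw [pow_succ]
            nlinarith
      · have := step (K^n * M) ih1
        have hrn : (0:ℝ) < r^n := pow_pos (by linarith) n
        calc r^(n+1) * deriv Φ M = r * (r^n * deriv Φ M) := by ring
          _ ≤ r * deriv Φ (K^n * M) := by nlinarith
          _ ≤ deriv Φ (K * (K^n * M)) := this
          _ = deriv Φ (K^(n+1) * M) := by ring_nf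
  have unbdd : ∀ L : ℝ, ∃ s, M ≤ s ∧ L ≤ deriv Φ s := by
    intro L
    obtain ⟨n, hn⟩ := pow_unbounded_of_one_lt (L / deriv Φ M) hr1
    obtain ⟨h1, h2⟩ := iter n
    refine ⟨K^n * M, h1, ?_⟩
    have : L / deriv Φ M * deriv Φ M < r^n * deriv Φ M := by nlinarith
    rw [div_mul_cancel₀ _ (ne_of_gt hdM)] at this
    linarith
  -- main part
  refine ⟨deriv Φ M, fun x hx _ => ?_⟩
  obtain ⟨s, hsM, hsx⟩ := unbdd x
  have hcont : ContinuousOn (deriv Φ) (Set.Icc M s) :=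
    (hΦ.continuous_deriv (by norm_num)).continuousOn
  have hIVT := intermediate_value_Icc hsM hcont
  have hxmem : x ∈ Set.Icc (deriv Φ M) (deriv Φ s) := ⟨hx, hsx⟩
  obtain ⟨t, htmem, htx⟩ := hIVT hxmem
  have hexists : ∃ a ∈ Set.Ici M, deriv Φ a = x := ⟨t, Set.mem_Ici.2 htmem.1, htx⟩
  set u := Function.invFunOn (deriv Φ) (Set.Ici M) x with hu
  have hu1 : u ∈ Set.Ici M := Function.invFunOn_mem hexists
  have hu2 : deriv Φ u = x := Function.invFunOn_eq hexists
  have htang : ∀ y : ℝ, x * y - Φ y ≤ x * u - Φ u := by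
    intro y
    have := tangent u y
    rw [hu2] at this
    nlinarith
  have hbdd : BddAbove (Set.range fun y : ℝ => x * y - Φ y) :=
    ⟨x * u - Φ u, by rintro _ ⟨y, rfl⟩; exact htang y⟩
  have hle : legendre Φ x ≤ x * u - Φ u := ciSup_le htang
  have hge : x * u - Φ u ≤ legendre Φ x := le_ciSup hbdd u
  obtain ⟨hH1, hH2⟩ := hH u (Set.mem_Ici.1 hu1)
  rw [hu2] at hH1 hH2
  constructor
  · nlinarith
  · nlinarith
end

section
/- Under hypothesis (H), there exists C ≥ 0 such that x² ≤ C·Φ*(x) for all sufficiently large x ≥ 0, where Φ* is the Legendre transform of Φ. -/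
open Real

/-!
Integrating the two halves of (H) (they say that `Φ(y) / y^(1+ε)` increases and
`Φ(y) / y^(2-ε)` decreases on `[M, ∞)`) gives `c y^(1+ε) ≤ Φ(y) ≤ d y^(2-ε)` there.
Testing `y = x` in the supremum then gives `Φ*(x) ≥ x² - Φ(x) ≥ x²/2` for large `x`. The
supremum is finite: `Φ ≥ Φ(0)` by convexity and evenness, and `Φ` eventually beats every line.
-/

open Filter Set

section EulerGrowth

variable {f : ℝ → ℝ} {M p : ℝ}

theorem hasDerivAt_mul_rpow {f' y : ℝ} (c : ℝ) (hf : HasDerivAt f f' y) (hy : 0 < y) :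
    HasDerivAt (fun z => f z * z ^ c) ((y * f' + c * f y) * y ^ (c - 1)) y := by
  have hpow : y ^ (c - 1) * y = y ^ c := by
    rw [← Real.rpow_add_one hy.ne', sub_add_cancel]
  exact (hf.mul (Real.hasDerivAt_rpow_const (Or.inl hy.ne'))).congr_deriv
    (by rw [← hpow]; ring)

theorem monotoneOn_mul_rpow_neg (hM : 0 < M) (hd : ∀ y ≥ M, DifferentiableAt ℝ f y)
    (hf : ∀ y ≥ M, p * f y ≤ y * deriv f y) :
    MonotoneOn (fun z => f z * z ^ (-p)) (Ici M) := by
  have hderiv : ∀ z ≥ M, HasDerivAt (fun z => f z * z ^ (-p))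
      ((z * deriv f z + -p * f z) * z ^ (-p - 1)) z := fun z hz =>
    hasDerivAt_mul_rpow (-p) (hd z hz).hasDerivAt (hM.trans_le hz)
  refine monotoneOn_of_deriv_nonneg (convex_Ici M)
    (fun z hz => (hderiv z hz).continuousAt.continuousWithinAt)
    (fun z hz => ?_) (fun z hz => ?_) <;> rw [interior_Ici] at hz
  · exact (hderiv z hz.le).differentiableAt.differentiableWithinAt
  · rw [(hderiv z hz.le).deriv]
    exact mul_nonneg (by linarith [hf z hz.le]) (Real.rpow_nonneg (hM.trans hz).le _)

theorem div_rpow_mul_rpow_le (hM : 0 < M) (hd : ∀ y ≥ M, DifferentiableAt ℝ f y)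
    (hf : ∀ y ≥ M, p * f y ≤ y * deriv f y) :
    ∀ y ≥ M, f M / M ^ p * y ^ p ≤ f y := by
  intro y hy
  have hy0 : 0 < y := hM.trans_le hy
  have hmono := monotoneOn_mul_rpow_neg hM hd hf (mem_Ici.2 le_rfl) hy hy
  calc f M / M ^ p * y ^ p = f M * M ^ (-p) * y ^ p := by
        rw [Real.rpow_neg hM.le, div_eq_mul_inv]
    _ ≤ f y * y ^ (-p) * y ^ p := by gcongr
    _ = f y := by rw [mul_assoc, ← Real.rpow_add hy0, neg_add_cancel, Real.rpow_zero, mul_one]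

theorem le_div_rpow_mul_rpow (hM : 0 < M) (hd : ∀ y ≥ M, DifferentiableAt ℝ f y)
    (hf : ∀ y ≥ M, y * deriv f y ≤ p * f y) :
    ∀ y ≥ M, f y ≤ f M / M ^ p * y ^ p := by
  have hneg := div_rpow_mul_rpow_le (f := -f) (p := p) hM (fun y hy => (hd y hy).neg)
    (fun y hy => by simp only [Pi.neg_apply, deriv.neg]; linarith [hf y hy])
  intro y hy
  have := hneg y hy
  simp only [Pi.neg_apply, neg_div, neg_mul] at this
  linarith

end EulerGrowth

theorem eventually_mul_le_of_rpow_le {f : ℝ → ℝ} {c p : ℝ} (hc : 0 < c) (hp : 1 < p)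
    (hf : ∀ᶠ y in atTop, c * y ^ p ≤ f y) (x : ℝ) : ∀ᶠ y in atTop, x * y ≤ f y := by
  have hlarge : ∀ᶠ y in atTop, x ≤ c * y ^ (p - 1) :=
    ((tendsto_rpow_atTop (sub_pos.2 hp)).const_mul_atTop hc).eventually_ge_atTop x
  filter_upwards [hf, hlarge, eventually_gt_atTop 0] with y hfy hxy hy
  calc x * y ≤ c * y ^ (p - 1) * y := by gcongr
    _ = c * y ^ p := by rw [mul_assoc, ← Real.rpow_add_one hy.ne', sub_add_cancel]
    _ ≤ f y := hfy

theorem eventually_le_mul_sq_of_le_rpow {f : ℝ → ℝ} {d k q : ℝ} (hk : 0 < k) (hq : q < 2)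
    (hf : ∀ᶠ y in atTop, f y ≤ d * y ^ q) : ∀ᶠ y in atTop, f y ≤ k * y ^ 2 := by
  have hlarge : ∀ᶠ y in atTop, d ≤ k * y ^ (2 - q) :=
    ((tendsto_rpow_atTop (sub_pos.2 hq)).const_mul_atTop hk).eventually_ge_atTop d
  filter_upwards [hf, hlarge, eventually_gt_atTop 0] with y hfy hdy hy
  calc f y ≤ d * y ^ q := hfy
    _ ≤ k * y ^ (2 - q) * y ^ q := by gcongr
    _ = k * y ^ 2 := by
      rw [mul_assoc, ← Real.rpow_add hy, sub_add_cancel, Real.rpow_two]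

theorem ConvexOn.apply_zero_le_of_even {Φ : ℝ → ℝ} (hconv : ConvexOn ℝ univ Φ)
    (hsym : ∀ x, Φ (-x) = Φ x) (y : ℝ) : Φ 0 ≤ Φ y := by
  have h := hconv.2 (mem_univ y) (mem_univ (-y)) (by norm_num : (0 : ℝ) ≤ 1 / 2)
    (by norm_num : (0 : ℝ) ≤ 1 / 2) (by norm_num)
  simp only [smul_eq_mul, hsym] at h
  have h0 : 1 / 2 * y + 1 / 2 * -y = 0 := by ring
  linarith [h0 ▸ h]

theorem bddAbove_range_mul_sub {Φ : ℝ → ℝ} {x m : ℝ} (hx : 0 ≤ x) (hm : ∀ y, m ≤ Φ y)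
    (hΦ : ∀ᶠ y in atTop, x * y ≤ Φ y) : BddAbove (range fun y => x * y - Φ y) := by
  obtain ⟨Y, hY⟩ := eventually_atTop.1 hΦ
  refine ⟨max (x * Y - m) 0, forall_mem_range.2 fun y => ?_⟩
  rcases le_total Y y with hy | hy
  · exact le_max_of_le_right (by linarith [hY y hy])
  · exact le_max_of_le_left (by linarith [hm y, mul_le_mul_of_nonneg_left hy hx])

theorem stmt4_general (Φ : ℝ → ℝ) (ε M : ℝ)
    (hΦ : ContDiff ℝ 2 Φ) (hsym : ∀ x, Φ (-x) = Φ x)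
    (hconv : ConvexOn ℝ Set.univ Φ)
    (hε : 0 < ε) (hM : 0 < M) (hΦM : 0 < Φ M)
    (hH : ∀ x ≥ M, (1 + ε) * Φ x ≤ x * deriv Φ x ∧ x * deriv Φ x ≤ (2 - ε) * Φ x) :
    ∃ C ≥ (0:ℝ), ∃ x₀ : ℝ, ∀ x ≥ x₀, 0 ≤ x → x ^ 2 ≤ C * legendre Φ x := by
  have hd : ∀ y ≥ M, DifferentiableAt ℝ Φ y := fun y _ =>
    hΦ.differentiable (by norm_num) y
  have hlower := div_rpow_mul_rpow_le hM hd fun y hy => (hH y hy).1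
  have hupper := le_div_rpow_mul_rpow hM hd fun y hy => (hH y hy).2
  have hbdd : ∀ x ≥ 0, BddAbove (range fun y => x * y - Φ y) := fun x hx =>
    bddAbove_range_mul_sub hx (hconv.apply_zero_le_of_even hsym)
      (eventually_mul_le_of_rpow_le (by positivity) (by linarith)
        (eventually_atTop.2 ⟨M, hlower⟩) x)
  obtain ⟨x₀, hx₀⟩ := eventually_atTop.1 <|
    eventually_le_mul_sq_of_le_rpow (k := 1 / 2) (by norm_num) (by linarith)
      (eventually_atTop.2 ⟨M, hupper⟩)
  refine ⟨2, zero_le_two, x₀, fun x hx hx0 => ?_⟩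
  have htest : x * x - Φ x ≤ legendre Φ x := le_ciSup (hbdd x hx0) x
  nlinarith [hx₀ x hx]

theorem stmt4 (Φ : ℝ → ℝ) (ε M : ℝ)
    (hΦ : ContDiff ℝ 2 Φ) (hsym : ∀ x, Φ (-x) = Φ x)
    (hconv : ConvexOn ℝ Set.univ Φ)
    (hε : 0 < ε) (hε' : ε ≤ 1/2) (hM : 0 < M) (hΦM : 0 < Φ M)
    (hH : ∀ x ≥ M, (1 + ε) * Φ x ≤ x * deriv Φ x ∧ x * deriv Φ x ≤ (2 - ε) * Φ x) :
    ∃ C ≥ (0:ℝ), ∃ x₀ : ℝ, ∀ x ≥ x₀, 0 ≤ x → x ^ 2 ≤ C * legendre Φ x :=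
  stmt4_general Φ ε M hΦ hsym hconv hε hM hΦM hH
end

section
/- Under hypothesis (H), there exists C > 0 such that for all sufficiently large x ≥ 0, (1/C)·Φ'⁻¹(x) ≤ Φ*(x)/x ≤ C·Φ'⁻¹(x), where Φ'⁻¹ is the inverse of Φ' on [M, ∞) and Φ* is the Legendre transform of Φ. -/
open Real

/-!
At a point `x = Φ' y` the supremum defining `Φ*(x)` is attained at `y` (tangent line inequality),
so `Φ*(x) / x = y - Φ y / x`. The growth condition `(1 + ε) Φ y ≤ y Φ'(y)` then gives
`ε / (1 + ε) * y ≤ Φ*(x) / x ≤ y`. That every large `x` is of the form `Φ' y` with `y ≥ M` follows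
from the intermediate value theorem once `Φ' → ∞`, which holds because the growth condition and
convexity give `Φ (2y) ≥ (2 + ε) Φ y`, so `Φ'(2ⁿ M) ≥ ((2 + ε) / 2)ⁿ Φ M / M`.
-/

open Set Filter Function

lemma ConvexOn.add_deriv_mul_sub_le {f : ℝ → ℝ} (hf : ConvexOn ℝ univ f) {y : ℝ}
    (hd : DifferentiableAt ℝ f y) (x : ℝ) : f y + deriv f y * (x - y) ≤ f x := by
  rcases lt_trichotomy y x with h | rfl | h
  · have hs := hf.deriv_le_slope (mem_univ y) (mem_univ x) h hd
    rw [slope_def_field, le_div_iff₀ (sub_pos.2 h)] at hs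
    linarith
  · simp
  · have hs := hf.slope_le_deriv (mem_univ x) (mem_univ y) h hd
    rw [slope_def_field, div_le_iff₀ (sub_pos.2 h)] at hs
    linarith

lemma legendre_eq_of_deriv_eq {Φ : ℝ → ℝ} (hconv : ConvexOn ℝ univ Φ) {x y : ℝ}
    (hd : DifferentiableAt ℝ Φ y) (hy : deriv Φ y = x) : legendre Φ x = x * y - Φ y := by
  have hle : ∀ z, x * z - Φ z ≤ x * y - Φ y := fun z => by
    have := hconv.add_deriv_mul_sub_le hd z
    rw [hy] at this
    linarith
  exact le_antisymm (ciSup_le hle) (le_ciSup ⟨_, forall_mem_range.2 hle⟩ y)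

lemma legendre_div_bounds_of_deriv_eq {Φ : ℝ → ℝ} (hconv : ConvexOn ℝ univ Φ) {ε x y : ℝ}
    (hε : 0 < ε) (hd : DifferentiableAt ℝ Φ y) (hy : deriv Φ y = x) (hx : 0 < x)
    (hΦy : 0 < Φ y) (hgrowth : (1 + ε) * Φ y ≤ y * x) :
    ε / (1 + ε) * y ≤ legendre Φ x / x ∧ legendre Φ x / x ≤ y := by
  rw [legendre_eq_of_deriv_eq hconv hd hy, le_div_iff₀ hx, div_le_iff₀ hx]
  constructor
  · rw [div_mul_eq_mul_div, div_mul_eq_mul_div, div_le_iff₀ (by positivity)]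
    nlinarith
  · nlinarith

section Growth

variable {Φ : ℝ → ℝ} {ε M : ℝ} (hconv : ConvexOn ℝ univ Φ) (hdiff : Differentiable ℝ Φ)
  (hgrowth : ∀ y ≥ M, (1 + ε) * Φ y ≤ y * deriv Φ y)
include hconv hdiff hgrowth

lemma add_mul_le_apply_two_mul {y : ℝ} (hy : M ≤ y) : (2 + ε) * Φ y ≤ Φ (2 * y) := by
  have := hconv.add_deriv_mul_sub_le (hdiff y) (2 * y)
  linarith [hgrowth y hy]

lemma pow_mul_le_apply_two_pow_mul (hε : 0 < ε) (hM : 0 < M) (n : ℕ) :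
    (2 + ε) ^ n * Φ M ≤ Φ (2 ^ n * M) := by
  induction n with
  | zero => simp
  | succ n ih =>
    have h2n : M ≤ 2 ^ n * M := le_mul_of_one_le_left hM.le (one_le_pow₀ one_le_two)
    calc (2 + ε) ^ (n + 1) * Φ M = (2 + ε) * ((2 + ε) ^ n * Φ M) := by ring
      _ ≤ (2 + ε) * Φ (2 ^ n * M) := by gcongr
      _ ≤ Φ (2 * (2 ^ n * M)) := add_mul_le_apply_two_mul hconv hdiff hgrowth h2n
      _ = Φ (2 ^ (n + 1) * M) := by ring_nf

lemma tendsto_deriv_two_pow_mul_atTop (hε : 0 < ε) (hM : 0 < M) (hΦM : 0 < Φ M) :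
    Tendsto (fun n : ℕ => deriv Φ (2 ^ n * M)) atTop atTop := by
  have hq : 1 < (2 + ε) / 2 := by rw [lt_div_iff₀ two_pos]; linarith
  refine tendsto_atTop_mono (fun n => ?_)
    ((tendsto_pow_atTop_atTop_of_one_lt hq).atTop_mul_const (div_pos hΦM hM))
  have h2n : M ≤ 2 ^ n * M := le_mul_of_one_le_left hM.le (one_le_pow₀ one_le_two)
  have hpow := pow_mul_le_apply_two_pow_mul hconv hdiff hgrowth hε hM n
  have hder := hgrowth _ h2n
  have hpos : 0 ≤ Φ (2 ^ n * M) := (by positivity : 0 ≤ (2 + ε) ^ n * Φ M).trans hpow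
  rw [div_pow, div_mul_div_comm, div_le_iff₀ (by positivity)]
  linarith [mul_nonneg hε.le hpos]

lemma tendsto_deriv_atTop (hε : 0 < ε) (hM : 0 < M) (hΦM : 0 < Φ M) :
    Tendsto (deriv Φ) atTop atTop := by
  refine Monotone.tendsto_atTop_atTop
    (monotoneOn_univ.1 (hconv.monotoneOn_deriv fun x _ => hdiff x)) fun b => ?_
  obtain ⟨n, hn⟩ :=
    ((tendsto_deriv_two_pow_mul_atTop hconv hdiff hgrowth hε hM hΦM).eventually_ge_atTop b).exists
  exact ⟨_, hn⟩

end Growth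

theorem stmt5_general (Φ : ℝ → ℝ) (ε M : ℝ)
    (hΦ : ContDiff ℝ 2 Φ)
    (hconv : ConvexOn ℝ Set.univ Φ)
    (hε : 0 < ε) (hM : 0 < M) (hΦM : 0 < Φ M)
    (hH : ∀ x ≥ M, (1 + ε) * Φ x ≤ x * deriv Φ x ∧ x * deriv Φ x ≤ (2 - ε) * Φ x) :
    ∃ C > (0:ℝ), ∃ x₀ : ℝ, ∀ x ≥ x₀, 0 ≤ x →
      (1 / C) * Function.invFunOn (deriv Φ) (Set.Ici M) x ≤ legendre Φ x / x ∧
      legendre Φ x / x ≤ C * Function.invFunOn (deriv Φ) (Set.Ici M) x := by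
  have hdiff : Differentiable ℝ Φ := hΦ.differentiable two_ne_zero
  have hgrowth : ∀ y ≥ M, (1 + ε) * Φ y ≤ y * deriv Φ y := fun y hy => (hH y hy).1
  have hΦ'M : 0 < deriv Φ M := by nlinarith [hgrowth M le_rfl]
  refine ⟨(1 + ε) / ε, by positivity, deriv Φ M, fun x hx _ => ?_⟩
  have hsurj : x ∈ deriv Φ '' Ici M :=
    intermediate_value_Ici (hΦ.continuous_deriv one_le_two).continuousOn
      (tendsto_deriv_atTop hconv hdiff hgrowth hε hM hΦM) hx
  set y := invFunOn (deriv Φ) (Ici M) x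
  have hyM : M ≤ y := invFunOn_mem hsurj
  have hΦy : 0 < Φ y := by nlinarith [hconv.add_deriv_mul_sub_le (hdiff M) y]
  have hyx : deriv Φ y = x := invFunOn_eq hsurj
  obtain ⟨hlower, hupper⟩ := legendre_div_bounds_of_deriv_eq hconv hε (hdiff y) hyx
    (hΦ'M.trans_le hx) hΦy (hyx ▸ hgrowth y hyM)
  have hC : 1 ≤ (1 + ε) / ε := by rw [le_div_iff₀ hε]; linarith
  rw [one_div_div]
  exact ⟨hlower, hupper.trans (le_mul_of_one_le_left (hM.trans_le hyM).le hC)⟩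

theorem stmt5 (Φ : ℝ → ℝ) (ε M : ℝ)
    (hΦ : ContDiff ℝ 2 Φ) (hsym : ∀ x, Φ (-x) = Φ x)
    (hconv : ConvexOn ℝ Set.univ Φ)
    (hε : 0 < ε) (hε' : ε ≤ 1/2) (hM : 0 < M) (hΦM : 0 < Φ M)
    (hH : ∀ x ≥ M, (1 + ε) * Φ x ≤ x * deriv Φ x ∧ x * deriv Φ x ≤ (2 - ε) * Φ x)
    (hmono : StrictMonoOn (deriv Φ) (Set.Ici M)) :
    ∃ C > (0:ℝ), ∃ x₀ : ℝ, ∀ x ≥ x₀, 0 ≤ x →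
      (1 / C) * Function.invFunOn (deriv Φ) (Set.Ici M) x ≤ legendre Φ x / x ∧
      legendre Φ x / x ≤ C * Function.invFunOn (deriv Φ) (Set.Ici M) x :=
  stmt5_general Φ ε M hΦ hconv hε hM hΦM hH
end

section
/- For every real x ≥ 0, x²·log(x²) ≤ 5(x-1)² + (x² - 1) + (x-2)₊² · log((x-2)₊²), where (y)₊ = max(y, 0) and the convention 0·log 0 = 0 is used. -/
/-!
Write `log (t ^ 2) = 2 log t`. For `x ≤ 2` the correction term vanishes and `log x ≤ x - 1`
leaves the cubic `2 (x - 1)² (2 - x) ≥ 0`. For `x > 2` split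
`x² log x - (x-2)² log (x-2) = (x-2)² log (x / (x-2)) + 4 (x - 1) log x`
and bound both logarithms by tangent lines, at `x - 2` and at `2`; with `log 2 < 0.7` what
remains is the quadratic `2x² - 7.6x + 9.6`, which has negative discriminant.
-/

open Real

lemma mul_log_sub_log_le {a x : ℝ} (ha : 0 < a) (hx : 0 < x) : a * (log x - log a) ≤ x - a := by
  have h := log_le_sub_one_of_pos (div_pos hx ha)
  rw [log_div hx.ne' ha.ne', le_sub_iff_add_le, le_div_iff₀ ha] at h
  linarith

lemma sq_mul_log_le {t : ℝ} (ht : 0 ≤ t) : t ^ 2 * log t ≤ t ^ 2 * (t - 1) := by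
  rcases ht.eq_or_lt with rfl | ht
  · simp
  · exact mul_le_mul_of_nonneg_left (log_le_sub_one_of_pos ht) (sq_nonneg t)

lemma sq_mul_log_sq_le_of_le_two {x : ℝ} (hx : 0 ≤ x) (h2 : x ≤ 2) :
    x ^ 2 * log (x ^ 2) ≤ 5 * (x - 1) ^ 2 + (x ^ 2 - 1) := by
  have hcubic : 0 ≤ (x - 1) ^ 2 * (2 - x) := mul_nonneg (sq_nonneg _) (by linarith)
  rw [log_pow, Nat.cast_ofNat]
  nlinarith [sq_mul_log_le hx]

lemma sq_mul_log_sq_le_of_two_lt {x : ℝ} (h2 : 2 < x) :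
    x ^ 2 * log (x ^ 2) ≤
      5 * (x - 1) ^ 2 + (x ^ 2 - 1) + (x - 2) ^ 2 * log ((x - 2) ^ 2) := by
  have hy : 0 < x - 2 := by linarith
  have hx : 0 < x := by linarith
  have hratio := mul_le_mul_of_nonneg_left (mul_log_sub_log_le hy hx) hy.le
  have htangent := mul_le_mul_of_nonneg_left (mul_log_sub_log_le two_pos hx)
    (by linarith : (0 : ℝ) ≤ 2 * (x - 1))
  have hlog2 : log 2 < 0.7 := log_two_lt_d9.trans (by norm_num)
  have hlog2' := mul_lt_mul_of_pos_left hlog2 (by linarith : (0 : ℝ) < 8 * (x - 1))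
  rw [log_pow, log_pow, Nat.cast_ofNat]
  nlinarith

theorem stmt6 (x : ℝ) (hx : 0 ≤ x) :
    x ^ 2 * Real.log (x ^ 2) ≤
      5 * (x - 1) ^ 2 + (x ^ 2 - 1) +
        (max (x - 2) 0) ^ 2 * Real.log ((max (x - 2) 0) ^ 2) := by
  rcases le_or_gt x 2 with h2 | h2
  · rw [max_eq_right (by linarith), zero_pow two_ne_zero, zero_mul, add_zero]
    exact sq_mul_log_sq_le_of_le_two hx h2
  · rw [max_eq_left (by linarith)]
    exact sq_mul_log_sq_le_of_two_lt h2
end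

section
/- For every a ≥ 2 there exists a constant A > 0 such that for all x ≥ 0, x²·log(x²) ≤ A(x-1)² + (x² - 1) + (x-a)₊² · log((x-a)₊²), with the convention 0·log 0 = 0. -/
open Real

theorem stmt7 (a : ℝ) (ha : 2 ≤ a) :
    ∃ A > (0:ℝ), ∀ x ≥ (0:ℝ),
      x ^ 2 * Real.log (x ^ 2) ≤
        A * (x - 1) ^ 2 + (x ^ 2 - 1) +
          (max (x - a) 0) ^ 2 * Real.log ((max (x - a) 0) ^ 2) := by
  refine ⟨(a + 1) ^ 2 + 12 * a, by nlinarith, fun x hx => ?_⟩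
  rcases le_or_gt x a with h | h
  · have hm : max (x - a) 0 = 0 := max_eq_right (by linarith)
    rw [hm]
    have h0 : (0:ℝ) ^ 2 * Real.log ((0:ℝ) ^ 2) = 0 := by simp
    rw [h0]
    have key : x ^ 2 * Real.log (x ^ 2) ≤ x ^ 2 * (x ^ 2 - 1) := by
      rcases eq_or_lt_of_le hx with h0' | h0'
      · simp [← h0']
      · have hl := Real.log_le_sub_one_of_pos (show (0:ℝ) < x ^ 2 by positivity)
        nlinarith [sq_nonneg x]
    have hfac : (0:ℝ) ≤ (x - 1) ^ 2 * ((a + 1) ^ 2 - (x + 1) ^ 2) := by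
      apply mul_nonneg (sq_nonneg _)
      nlinarith
    nlinarith [sq_nonneg (x - 1)]
  · have hm : max (x - a) 0 = x - a := max_eq_left (by linarith)
    rw [hm]
    set y := x - a with hy
    have hy0 : 0 < y := by simp only [hy]; linarith
    have hx0 : 0 < x := by linarith
    have hlx : Real.log (x ^ 2) = 2 * Real.log x := by
      rw [Real.log_pow]; push_cast; ring
    have hly : Real.log (y ^ 2) = 2 * Real.log y := by
      rw [Real.log_pow]; push_cast; ring
    rw [hlx, hly]
    have h1 : Real.log x ≤ x - 1 := Real.log_le_sub_one_of_pos hx0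
    have h2 : Real.log x - Real.log y ≤ x / y - 1 := by
      rw [← Real.log_div (ne_of_gt hx0) (ne_of_gt hy0)]
      exact Real.log_le_sub_one_of_pos (div_pos hx0 hy0)
    have h2' : y * (Real.log x - Real.log y) ≤ x - y := by
      have := mul_le_mul_of_nonneg_left h2 hy0.le
      calc y * (Real.log x - Real.log y) ≤ y * (x / y - 1) := this
        _ = x - y := by field_simp
    have hxy2 : (0:ℝ) ≤ x ^ 2 - y ^ 2 := by nlinarith
    have t1 : (x ^ 2 - y ^ 2) * Real.log x ≤ (x ^ 2 - y ^ 2) * (x - 1) :=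
      mul_le_mul_of_nonneg_left h1 hxy2
    have t2 : y * (y * (Real.log x - Real.log y)) ≤ y * (x - y) :=
      mul_le_mul_of_nonneg_left h2' hy0.le
    have hx2 : 2 ≤ x := by linarith
    have hpoly : 2 * (x ^ 2 - y ^ 2) * (x - 1) + 2 * (y * (x - y)) ≤
        ((a + 1) ^ 2 + 12 * a) * (x - 1) ^ 2 + (x ^ 2 - 1) := by
      rw [hy]
      nlinarith [sq_nonneg (x - 1), mul_nonneg (sq_nonneg a) (show (0:ℝ) ≤ x - 1 by linarith),
        mul_nonneg (mul_nonneg (show (0:ℝ) ≤ a by linarith) (show (0:ℝ) ≤ x - 1 by linarith))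
          (show (0:ℝ) ≤ x - 2 by linarith),
        mul_nonneg (show (0:ℝ) ≤ a by linarith) (sq_nonneg (x - 1)),
        mul_nonneg (sq_nonneg (a + 1)) (sq_nonneg (x - 1))]
    linarith [t1, t2, hpoly]
end

section
/- Let μ be a probability measure, f a measurable function with ∫ f² dμ = 1 and f² log f² integrable, and g a measurable function with g ≥ 0. Then ∫ f² g dμ ≤ Ent_μ(f²) + log ∫ e^g dμ, where Ent_μ(f²) = ∫ f² log f² dμ (integrals possibly infinite on the right-hand side), with the convention 0·log 0 = 0. -/
open MeasureTheory ENNReal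

lemma young_aux (a b : ℝ) (ha : 0 ≤ a) :
    a * b ≤ a * Real.log a - a + Real.exp b := by
  rcases ha.eq_or_lt with h | h
  · simp only [← h, zero_mul, zero_sub, neg_zero, sub_zero, zero_add]
    positivity
  · have h1 : b - Real.log a + 1 ≤ Real.exp (b - Real.log a) := Real.add_one_le_exp _
    have h2 : a * (b - Real.log a + 1) ≤ a * Real.exp (b - Real.log a) :=
      mul_le_mul_of_nonneg_left h1 h.le
    have h3 : a * Real.exp (b - Real.log a) = Real.exp b := by
      rw [Real.exp_sub, Real.exp_log h]
      field_simp
    nlinarith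

theorem stmt10 {α : Type*} [MeasurableSpace α] (μ : Measure α) [IsProbabilityMeasure μ]
    (f g : α → ℝ) (hfm : Measurable f) (hgm : Measurable g) (hg : ∀ x, 0 ≤ g x)
    (hf2 : Integrable (fun x => f x ^ 2) μ)
    (hnorm : ∫ x, f x ^ 2 ∂μ = 1)
    (hent : Integrable (fun x => f x ^ 2 * Real.log (f x ^ 2)) μ) :
    (∫⁻ x, ENNReal.ofReal (f x ^ 2 * g x) ∂μ).toEReal ≤
      ((∫ x, f x ^ 2 * Real.log (f x ^ 2) ∂μ : ℝ) : EReal) +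
        ENNReal.log (∫⁻ x, ENNReal.ofReal (Real.exp (g x)) ∂μ) := by
  set T := ∫⁻ x, ENNReal.ofReal (Real.exp (g x)) ∂μ with hT
  by_cases hTtop : T = ⊤
  · rw [hTtop, ENNReal.log_top, EReal.add_top_of_ne_bot (by simp)]
    exact le_top
  have hT1 : 1 ≤ T := by
    calc (1 : ℝ≥0∞) = ∫⁻ _, 1 ∂μ := by simp
    _ ≤ T := lintegral_mono fun x => by
        simpa using ENNReal.ofReal_le_ofReal (Real.one_le_exp (hg x))
  set t := T.toReal with ht
  have ht1 : 1 ≤ t := by simpa using ENNReal.toReal_mono hTtop hT1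
  have ht0 : 0 < t := lt_of_lt_of_le one_pos ht1
  have hexpm : Measurable fun x => Real.exp (g x) := Real.measurable_exp.comp hgm
  have hexp : Integrable (fun x => Real.exp (g x)) μ := by
    refine ⟨hexpm.aestronglyMeasurable, ?_⟩
    rw [hasFiniteIntegral_iff_ofReal (ae_of_all _ fun x => (Real.exp_pos _).le)]
    exact lt_top_iff_ne_top.2 hTtop
  have hint_exp : ∫ x, Real.exp (g x) ∂μ = t := by
    rw [integral_eq_lintegral_of_nonneg_ae (ae_of_all _ fun x => (Real.exp_pos _).le)
      hexpm.aestronglyMeasurable]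
  set φ : α → ℝ := fun x =>
    f x ^ 2 * Real.log (f x ^ 2) + f x ^ 2 * Real.log t - f x ^ 2 + Real.exp (g x) / t
    with hφ
  have hptwise : ∀ x, f x ^ 2 * g x ≤ φ x := by
    intro x
    have h1 := young_aux (f x ^ 2) (g x - Real.log t) (sq_nonneg _)
    have h2 : Real.exp (g x - Real.log t) = Real.exp (g x) / t := by
      rw [Real.exp_sub, Real.exp_log ht0]
    rw [h2] at h1
    simp only [hφ]
    nlinarith [sq_nonneg (f x)]
  have hφnn : ∀ x, 0 ≤ φ x := fun x =>
    le_trans (mul_nonneg (sq_nonneg _) (hg x)) (hptwise x)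
  have i2 : Integrable (fun x => f x ^ 2 * Real.log (f x ^ 2) + f x ^ 2 * Real.log t) μ := by
    exact hent.add (hf2.mul_const _)
  have i3 : Integrable
      (fun x => f x ^ 2 * Real.log (f x ^ 2) + f x ^ 2 * Real.log t - f x ^ 2) μ := by
    exact i2.sub hf2
  have i4 : Integrable (fun x => Real.exp (g x) / t) μ := hexp.div_const t
  have hφint : Integrable φ μ := by exact i3.add i4
  have hφval : ∫ x, φ x ∂μ = (∫ x, f x ^ 2 * Real.log (f x ^ 2) ∂μ) + Real.log t := by
    simp only [hφ]
    rw [integral_add i3 i4, integral_sub i2 hf2,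
      integral_add hent (hf2.mul_const _), integral_mul_const, integral_div,
      hnorm, hint_exp, div_self ht0.ne']
    ring
  have key : (∫⁻ x, ENNReal.ofReal (f x ^ 2 * g x) ∂μ) ≤
      ENNReal.ofReal ((∫ x, f x ^ 2 * Real.log (f x ^ 2) ∂μ) + Real.log t) := by
    calc (∫⁻ x, ENNReal.ofReal (f x ^ 2 * g x) ∂μ)
        ≤ ∫⁻ x, ENNReal.ofReal (φ x) ∂μ :=
          lintegral_mono fun x => ENNReal.ofReal_le_ofReal (hptwise x)
      _ = ENNReal.ofReal (∫ x, φ x ∂μ) :=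
          (ofReal_integral_eq_lintegral_ofReal hφint (ae_of_all _ hφnn)).symm
      _ = _ := by rw [hφval]
  have hs : 0 ≤ (∫ x, f x ^ 2 * Real.log (f x ^ 2) ∂μ) + Real.log t := by
    rw [← hφval]; exact integral_nonneg hφnn
  have hlog : ENNReal.log T = (Real.log t : EReal) :=
    ENNReal.log_pos_real (ne_of_gt (lt_of_lt_of_le one_pos hT1)) hTtop
  rw [hlog, ← EReal.coe_add]
  calc ((∫⁻ x, ENNReal.ofReal (f x ^ 2 * g x) ∂μ).toEReal)
      ≤ (ENNReal.ofReal ((∫ x, f x ^ 2 * Real.log (f x ^ 2) ∂μ) + Real.log t) : EReal) :=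
        EReal.coe_ennreal_le_coe_ennreal_iff.2 key
    _ = _ := by rw [EReal.coe_ennreal_ofReal, max_eq_left hs]
end

section
/- Under hypothesis (H), there exist K > 1 and x₀ such that for all x ≥ x₀: Φ'(x)·e^{Φ(x)} ≤ e^{K·Φ(x)}, and consequently ∫_x^∞ e^{-Φ(t)} dt ≥ e^{-K·Φ(x)}. -/
/-!
Take `K = 2`. By (H) at `M`, `Φ'(M) > 0`, so by convexity `Φ` is increasing on `[M, ∞)` and lies
above its tangent line at `M`; hence `e^{-Φ}` is integrable on `[x, ∞)`. The upper half of (H)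
gives `x Φ'(x) ≤ 2 Φ(x)`, so `Φ' ≤ Φ ≤ e^Φ` for `x ≥ 2`, and, comparing with the secant slope on
`[x, x + 1]`, `Φ(x + 1) ≤ 2 Φ(x)` for `x ≥ 3`. The integral is then at least its part over
`[x, x + 1]`, where `e^{-Φ} ≥ e^{-Φ(x + 1)} ≥ e^{-2Φ(x)}`.
-/

open Real MeasureTheory Set

namespace ConvexOn

variable {f : ℝ → ℝ}

lemma add_deriv_mul_sub_le_s12 (hf : ConvexOn ℝ univ f) {x y : ℝ} (hxy : x ≤ y)
    (hd : DifferentiableAt ℝ f x) : f x + deriv f x * (y - x) ≤ f y := by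
  rcases hxy.eq_or_lt with rfl | hlt
  · simp
  · have hslope := hf.deriv_le_slope (mem_univ x) (mem_univ y) hlt hd
    rw [slope_def_field, le_div_iff₀ (sub_pos.2 hlt)] at hslope
    linarith

lemma monotoneOn_Ici_of_deriv_nonneg (hf : ConvexOn ℝ univ f) (hd : Differentiable ℝ f)
    {a : ℝ} (ha : 0 ≤ deriv f a) : MonotoneOn f (Ici a) := by
  intro x hx y _ hxy
  have hderiv : 0 ≤ deriv f x :=
    ha.trans (hf.monotoneOn_deriv (fun z _ => hd z) (mem_univ a) (mem_univ x) hx)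
  nlinarith [hf.add_deriv_mul_sub_le_s12 hxy (hd x)]

lemma integrableOn_exp_neg_Ici (hf : ConvexOn ℝ univ f) (hd : Differentiable ℝ f)
    {a : ℝ} (ha : 0 < deriv f a) : IntegrableOn (fun t => exp (-f t)) (Ici a) := by
  have hdecay : IntegrableOn (fun t => exp (deriv f a * a - f a) * exp (-deriv f a * t))
      (Ici a) := by
    rw [integrableOn_Ici_iff_integrableOn_Ioi]
    exact (exp_neg_integrableOn_Ioi a ha).const_mul _
  refine hdecay.integrable.mono' hd.continuous.neg.rexp.aestronglyMeasurable ?_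
  filter_upwards [ae_restrict_mem measurableSet_Ici] with t (ht : a ≤ t)
  rw [norm_of_nonneg (exp_pos _).le, ← exp_add, exp_le_exp]
  linarith [hf.add_deriv_mul_sub_le_s12 ht (hd a)]

lemma apply_add_one_le_two_mul (hf : ConvexOn ℝ univ f) {x : ℝ} (hx : 3 ≤ x)
    (hd : DifferentiableAt ℝ f (x + 1)) (hpos : 0 ≤ f (x + 1))
    (hgrowth : (x + 1) * deriv f (x + 1) ≤ 2 * f (x + 1)) : f (x + 1) ≤ 2 * f x := by
  have hslope := hf.slope_le_deriv (mem_univ x) (mem_univ (x + 1)) (by linarith) hd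
  rw [slope_def_field, add_sub_cancel_left, div_one] at hslope
  nlinarith [mul_nonneg hpos (sub_nonneg.2 hx)]

end ConvexOn

lemma mul_le_setIntegral_Ici_of_antitoneOn {g : ℝ → ℝ} {x h : ℝ} (hh : 0 ≤ h)
    (hg : IntegrableOn g (Ici x)) (hg0 : ∀ t ∈ Ici x, 0 ≤ g t)
    (hanti : AntitoneOn g (Icc x (x + h))) : h * g (x + h) ≤ ∫ t in Ici x, g t := by
  have hmem : x + h ∈ Icc x (x + h) := ⟨by linarith, le_rfl⟩
  calc h * g (x + h) = g (x + h) * volume.real (Ioc x (x + h)) := by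
        rw [Real.volume_real_Ioc_of_le (by linarith), add_sub_cancel_left, mul_comm]
    _ ≤ ∫ t in Ioc x (x + h), g t :=
        setIntegral_ge_of_const_le_real measurableSet_Ioc measure_Ioc_lt_top.ne
          (fun t ht => hanti (Ioc_subset_Icc_self ht) hmem ht.2)
          (hg.mono_set fun t ht => ht.1.le)
    _ ≤ ∫ t in Ici x, g t :=
        setIntegral_mono_set hg ((ae_restrict_mem measurableSet_Ici).mono hg0)
          (Filter.Eventually.of_forall fun t ht => ht.1.le)

theorem stmt12_general (Φ : ℝ → ℝ) (ε M : ℝ)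
    (hΦ : ContDiff ℝ 2 Φ)
    (hconv : ConvexOn ℝ Set.univ Φ)
    (hε : 0 < ε) (hM : 0 < M) (hΦM : 0 < Φ M)
    (hH : ∀ x ≥ M, (1 + ε) * Φ x ≤ x * deriv Φ x ∧ x * deriv Φ x ≤ (2 - ε) * Φ x) :
    ∃ K > (1:ℝ), ∃ x₀ : ℝ, ∀ x ≥ x₀,
      deriv Φ x * Real.exp (Φ x) ≤ Real.exp (K * Φ x) ∧
      Real.exp (-(K * Φ x)) ≤ ∫ t in Set.Ici x, Real.exp (-Φ t) := by
  have hd : Differentiable ℝ Φ := hΦ.differentiable (by norm_num)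
  have hderivM : 0 < deriv Φ M :=
    pos_of_mul_pos_right ((by positivity : 0 < (1 + ε) * Φ M).trans_le (hH M le_rfl).1) hM.le
  have hmono := hconv.monotoneOn_Ici_of_deriv_nonneg hd hderivM.le
  have hpos : ∀ x ≥ M, 0 < Φ x := fun x hx => hΦM.trans_le (hmono self_mem_Ici hx hx)
  have hgrowth : ∀ x ≥ M, x * deriv Φ x ≤ 2 * Φ x := fun x hx => by
    nlinarith [(hH x hx).2, hpos x hx]
  refine ⟨2, one_lt_two, M + 3, fun x hx => ⟨?_, ?_⟩⟩
  · have hderiv_le : deriv Φ x ≤ Φ x := by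
      nlinarith [hgrowth x (by linarith), hpos x (by linarith)]
    calc deriv Φ x * exp (Φ x) ≤ exp (Φ x) * exp (Φ x) := by
          gcongr; linarith [add_one_le_exp (Φ x)]
      _ = exp (2 * Φ x) := by rw [← exp_add, two_mul]
  · have hdouble : Φ (x + 1) ≤ 2 * Φ x := hconv.apply_add_one_le_two_mul (by linarith) (hd _)
      (hpos _ (by linarith)).le (hgrowth _ (by linarith))
    have hanti : AntitoneOn (fun t => exp (-Φ t)) (Icc x (x + 1)) := fun s hs t ht hst =>
      exp_le_exp.2 <| neg_le_neg <|
        hmono (mem_Ici.2 (by linarith [hs.1])) (mem_Ici.2 (by linarith [ht.1])) hst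
    calc exp (-(2 * Φ x)) ≤ 1 * exp (-Φ (x + 1)) := by rw [one_mul, exp_le_exp]; linarith
      _ ≤ ∫ t in Ici x, exp (-Φ t) :=
          mul_le_setIntegral_Ici_of_antitoneOn zero_le_one
            ((hconv.integrableOn_exp_neg_Ici hd hderivM).mono_set (Ici_subset_Ici.2 (by linarith)))
            (fun t _ => (exp_pos _).le) hanti

theorem stmt12 (Φ : ℝ → ℝ) (ε M : ℝ)
    (hΦ : ContDiff ℝ 2 Φ) (hsym : ∀ x, Φ (-x) = Φ x)
    (hconv : ConvexOn ℝ Set.univ Φ)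
    (hε : 0 < ε) (hε' : ε ≤ 1/2) (hM : 0 < M) (hΦM : 0 < Φ M)
    (hH : ∀ x ≥ M, (1 + ε) * Φ x ≤ x * deriv Φ x ∧ x * deriv Φ x ≤ (2 - ε) * Φ x) :
    ∃ K > (1:ℝ), ∃ x₀ : ℝ, ∀ x ≥ x₀,
      deriv Φ x * Real.exp (Φ x) ≤ Real.exp (K * Φ x) ∧
      Real.exp (-(K * Φ x)) ≤ ∫ t in Set.Ici x, Real.exp (-Φ t) :=
  stmt12_general Φ ε M hΦ hconv hε hM hΦM hH
end

section
/- Under hypothesis (H), the function h defined by h(x) = 1 for |x| < M and h(x) = x²/Φ(x) for |x| ≥ M is nondecreasing on [M, ∞) and tends to +∞ as x → ∞. -/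
/-! The two inequalities of (H) say that `Φ x / x ^ (1 + ε)` is nondecreasing and
`Φ x / x ^ (2 - ε)` nonincreasing on `[M, ∞)`. The first keeps `Φ` positive there, since
`Φ M > 0`. The second lets one write `h x = x ^ ε / (Φ x / x ^ (2 - ε))`: a nondecreasing
numerator over a positive nonincreasing denominator, bounded below by
`x ^ ε / (Φ M / M ^ (2 - ε)) → ∞`. -/

open Real Filter Set

theorem monotoneOn_div_rpow_of_mul_le_mul_deriv {f : ℝ → ℝ} {p : ℝ} {D : Set ℝ}
    (hD : Convex ℝ D) (hD0 : D ⊆ Ioi 0) (hf : ∀ x ∈ D, DifferentiableAt ℝ f x)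
    (hp : ∀ x ∈ D, p * f x ≤ x * deriv f x) :
    MonotoneOn (fun x => f x / x ^ p) D := by
  have hderiv : ∀ x ∈ D, HasDerivAt (fun x => f x / x ^ p)
      ((deriv f x * x ^ p - f x * (p * x ^ (p - 1))) / (x ^ p) ^ 2) x := fun x hx =>
    (hf x hx).hasDerivAt.div (hasDerivAt_rpow_const (Or.inl (hD0 hx).ne'))
      (rpow_pos_of_pos (hD0 hx) p).ne'
  refine monotoneOn_of_hasDerivWithinAt_nonneg hD
    (fun x hx => (hderiv x hx).continuousAt.continuousWithinAt)
    (fun x hx => (hderiv x (interior_subset hx)).hasDerivWithinAt) fun x hxD => ?_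
  have hx : 0 < x := hD0 (interior_subset hxD)
  have hnum : deriv f x * x ^ p - f x * (p * x ^ (p - 1))
      = x ^ p / x * (x * deriv f x - p * f x) := by
    rw [rpow_sub_one hx.ne']
    field_simp
  have hxp := rpow_pos_of_pos hx p
  have hgap : 0 ≤ x * deriv f x - p * f x := sub_nonneg.mpr (hp x (interior_subset hxD))
  rw [hnum]
  positivity

theorem antitoneOn_div_rpow_of_mul_deriv_le_mul {f : ℝ → ℝ} {p : ℝ} {D : Set ℝ}
    (hD : Convex ℝ D) (hD0 : D ⊆ Ioi 0) (hf : ∀ x ∈ D, DifferentiableAt ℝ f x)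
    (hp : ∀ x ∈ D, x * deriv f x ≤ p * f x) :
    AntitoneOn (fun x => f x / x ^ p) D := by
  have hneg := monotoneOn_div_rpow_of_mul_le_mul_deriv (f := -f) hD hD0
    (fun x hx => (hf x hx).neg) fun x hx => by
      simp only [Pi.neg_apply, deriv.neg']
      linarith [hp x hx]
  intro a ha b hb hab
  have hab' := hneg ha hb hab
  simp only [Pi.neg_apply, neg_div] at hab'
  exact neg_le_neg_iff.mp hab'

theorem pos_of_mul_le_mul_deriv {f : ℝ → ℝ} {p M : ℝ} (hM : 0 < M) (hfM : 0 < f M)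
    (hf : ∀ x ∈ Ici M, DifferentiableAt ℝ f x) (hp : ∀ x ∈ Ici M, p * f x ≤ x * deriv f x) :
    ∀ x ∈ Ici M, 0 < f x := fun x hx => by
  have hmono := monotoneOn_div_rpow_of_mul_le_mul_deriv (convex_Ici M)
    (fun y hy => hM.trans_le hy) hf hp self_mem_Ici hx hx
  have hx0 : 0 < x ^ p := rpow_pos_of_pos (hM.trans_le hx) p
  exact (div_pos_iff_of_pos_right hx0).mp ((div_pos hfM (rpow_pos_of_pos hM p)).trans_le hmono)

theorem MonotoneOn.div_of_antitoneOn {α 𝕜 : Type*} [Preorder α] [Semifield 𝕜] [LinearOrder 𝕜]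
    [IsStrictOrderedRing 𝕜] {u g : α → 𝕜} {s : Set α} (hu : MonotoneOn u s)
    (hg : AntitoneOn g s) (hu0 : ∀ x ∈ s, 0 ≤ u x) (hg0 : ∀ x ∈ s, 0 < g x) :
    MonotoneOn (fun x => u x / g x) s := fun _ ha _ hb hab =>
  div_le_div₀ (hu0 _ hb) (hu ha hb hab) (hg0 _ hb) (hg ha hb hab)

theorem stmt14_general (Φ : ℝ → ℝ) (ε M : ℝ)
    (hΦ : ContDiff ℝ 2 Φ)
    (hε : 0 < ε) (hM : 0 < M) (hΦM : 0 < Φ M)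
    (hH : ∀ x ≥ M, (1 + ε) * Φ x ≤ x * deriv Φ x ∧ x * deriv Φ x ≤ (2 - ε) * Φ x)
    (h : ℝ → ℝ)
    (hdef : ∀ x, h x = if |x| < M then 1 else x ^ 2 / Φ x) :
    MonotoneOn h (Set.Ici M) ∧ Tendsto h atTop atTop := by
  have hdiff : ∀ x ∈ Ici M, DifferentiableAt ℝ Φ x := fun x _ => hΦ.differentiable two_ne_zero x
  have hM0 : Ici M ⊆ Ioi 0 := fun x hx => hM.trans_le hx
  have hpos := pos_of_mul_le_mul_deriv hM hΦM hdiff fun x hx => (hH x hx).1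
  set g := fun x => Φ x / x ^ (2 - ε)
  have hg : AntitoneOn g (Ici M) :=
    antitoneOn_div_rpow_of_mul_deriv_le_mul (convex_Ici M) hM0 hdiff fun x hx => (hH x hx).2
  have hg0 : ∀ x ∈ Ici M, 0 < g x := fun x hx => div_pos (hpos x hx) (rpow_pos_of_pos (hM0 hx) _)
  have heq : EqOn h (fun x => x ^ ε / g x) (Ici M) := fun x (hx : M ≤ x) => by
    have hx0 : 0 < x := hM.trans_le hx
    have hsq : x ^ ε * x ^ (2 - ε) = x ^ 2 := by
      rw [← rpow_add hx0, add_sub_cancel, rpow_two]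
    change h x = x ^ ε / (Φ x / x ^ (2 - ε))
    rw [hdef, if_neg (by rwa [not_lt, abs_of_pos hx0]), div_div_eq_mul_div, hsq]
  have hrpow : MonotoneOn (fun x : ℝ => x ^ ε) (Ici M) :=
    (monotoneOn_rpow_Ici_of_exponent_nonneg hε.le).mono (Ici_subset_Ici.mpr hM.le)
  refine ⟨(hrpow.div_of_antitoneOn hg (fun x hx => (rpow_pos_of_pos (hM0 hx) ε).le) hg0).congr
    heq.symm, ?_⟩
  refine tendsto_atTop_mono' atTop ((eventually_ge_atTop M).mono fun x hx => ?_)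
    ((tendsto_rpow_atTop hε).atTop_div_const (hg0 M self_mem_Ici))
  rw [heq hx]
  exact div_le_div_of_nonneg_left (rpow_pos_of_pos (hM0 hx) ε).le (hg0 x hx) (hg self_mem_Ici hx hx)

theorem stmt14 (Φ : ℝ → ℝ) (ε M : ℝ)
    (hΦ : ContDiff ℝ 2 Φ) (hsym : ∀ x, Φ (-x) = Φ x)
    (hconv : ConvexOn ℝ Set.univ Φ)
    (hε : 0 < ε) (hε' : ε ≤ 1/2) (hM : 0 < M) (hΦM : 0 < Φ M)
    (hH : ∀ x ≥ M, (1 + ε) * Φ x ≤ x * deriv Φ x ∧ x * deriv Φ x ≤ (2 - ε) * Φ x)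
    (h : ℝ → ℝ)
    (hdef : ∀ x, h x = if |x| < M then 1 else x ^ 2 / Φ x) :
    MonotoneOn h (Set.Ici M) ∧ Tendsto h atTop atTop :=
  stmt14_general Φ ε M hΦ hε hM hΦM hH h hdef
end
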